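/- For a convex function F = g + r with g differentiable, ∇g L-Lipschitz, r convex, step size α = 1/L, and minimizer z* of F, the proximal gradient iterates z^{(k)} satisfy F(z^{(K)}) − F(z*) ≤ L·‖z^{(0)} − z*‖₂²/(2K), i.e., an O(1/K) rate. -/

import Mathlib

/-!
Three inequalities drive the proximal gradient method: the first-order characterisation of the
convex function `g`, the descent lemma for its `L`-Lipschitz gradient, and the variational
inequality of the proximal point. Adding them gives, for every `w`,
`F(z⁺) ≤ F(w) + L/2 (‖w - z‖² - ‖w - z⁺‖²)`. With `w = z` the values `F(z⁽ᵏ⁾)` decrease, and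
with `w = z*` the right-hand sides telescope, so `K (F(z⁽ᴷ⁾) - F(z*)) ≤ L/2 ‖z⁽⁰⁾ - z*‖²`.
-/

open Set Filter Topology AffineMap
open scoped RealInnerProductSpace

theorem le_of_forall_mem_Ioc_le_add_mul {a b c : ℝ} (h : ∀ t ∈ Ioc (0 : ℝ) 1, a ≤ b + t * c) :
    a ≤ b := by
  have hlim : Tendsto (fun t : ℝ ↦ b + t * c) (𝓝[>] 0) (𝓝 b) :=
    tendsto_nhdsWithin_of_tendsto_nhds ((continuous_const.add
      (continuous_id.mul continuous_const)).tendsto' _ _ (by simp))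
  exact ge_of_tendsto hlim (eventually_of_mem (Ioc_mem_nhdsGT zero_lt_one) h)

theorem nat_mul_sub_le_of_telescope {f d : ℕ → ℝ} {fmin c : ℝ} (hf : ∀ k, f (k + 1) ≤ f k)
    (hd : ∀ k, f (k + 1) - fmin ≤ c * (d k - d (k + 1))) (n : ℕ) :
    n * (f n - fmin) ≤ c * (d 0 - d n) := by
  induction n with
  | zero => simp
  | succ n ih =>
    have := mul_le_mul_of_nonneg_left (hf n) n.cast_nonneg
    push_cast
    linarith [hd n]

variable {E : Type*} [NormedAddCommGroup E] [InnerProductSpace ℝ E]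

section Gradient

variable [CompleteSpace E]

theorem HasGradientAt.hasDerivAt_comp_lineMap {g : E → ℝ} {g' a b : E} {t : ℝ}
    (hg : HasGradientAt g g' (lineMap a b t)) :
    HasDerivAt (g ∘ lineMap a b) ⟪g', b - a⟫ t := by
  simpa [InnerProductSpace.toDual_apply_apply] using
    hg.hasFDerivAt.comp_hasDerivAt t hasDerivAt_lineMap

theorem ConvexOn.add_inner_le_of_hasGradientAt {s : Set E} {g : E → ℝ} {g' a b : E}
    (hg : ConvexOn ℝ s g) (ha : a ∈ s) (hb : b ∈ s) (hg' : HasGradientAt g g' a) :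
    g a + ⟪g', b - a⟫ ≤ g b := by
  have hslope := (hg.comp_affineMap (lineMap a b)).le_slope_of_hasDerivAt
    (by simpa using ha) (by simpa using hb) zero_lt_one
    (HasGradientAt.hasDerivAt_comp_lineMap (by simpa using hg'))
  rw [slope_def_field] at hslope
  simp only [Function.comp_apply, lineMap_apply_one, lineMap_apply_zero, sub_zero,
    div_one] at hslope
  linarith

theorem le_add_inner_add_sq_of_gradient_lipschitz {g : E → ℝ} {gradg : E → E}
    (hgrad : ∀ z, HasGradientAt g (gradg z) z) {L : ℝ}
    (hLip : ∀ z₁ z₂, ‖gradg z₁ - gradg z₂‖ ≤ L * ‖z₁ - z₂‖) (a b : E) :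
    g b ≤ g a + ⟪gradg a, b - a⟫ + L / 2 * ‖b - a‖ ^ 2 := by
  set ψ : ℝ → ℝ := fun t ↦ g (lineMap a b t) - t * ⟪gradg a, b - a⟫ - L / 2 * ‖b - a‖ ^ 2 * t ^ 2
  have hψ : ∀ t, HasDerivAt ψ
      (⟪gradg (lineMap a b t) - gradg a, b - a⟫ - L * ‖b - a‖ ^ 2 * t) t := by
    intro t
    refine ((((hgrad _).hasDerivAt_comp_lineMap).sub ((hasDerivAt_id t).mul_const _)).sub
      (((hasDerivAt_id t).pow 2).const_mul (L / 2 * ‖b - a‖ ^ 2))).congr_deriv ?_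
    simp only [inner_sub_left, _root_.id]
    ring
  have hψ_nonpos : ∀ t ∈ interior (Ici (0 : ℝ)),
      ⟪gradg (lineMap a b t) - gradg a, b - a⟫ - L * ‖b - a‖ ^ 2 * t ≤ 0 := by
    intro t ht
    rw [interior_Ici] at ht
    have hdist : ‖lineMap a b t - a‖ = t * ‖b - a‖ := by
      rw [← dist_eq_norm, dist_lineMap_left, Real.norm_of_nonneg ht.le, dist_eq_norm']
    rw [sub_nonpos]
    calc ⟪gradg (lineMap a b t) - gradg a, b - a⟫
        ≤ ‖gradg (lineMap a b t) - gradg a‖ * ‖b - a‖ := real_inner_le_norm _ _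
      _ ≤ L * ‖lineMap a b t - a‖ * ‖b - a‖ := by gcongr; exact hLip _ _
      _ = L * ‖b - a‖ ^ 2 * t := by rw [hdist]; ring
  have hanti : AntitoneOn ψ (Ici 0) :=
    antitoneOn_of_hasDerivWithinAt_nonpos (convex_Ici 0)
      (fun t _ ↦ (hψ t).continuousAt.continuousWithinAt)
      (fun t _ ↦ (hψ t).hasDerivWithinAt) hψ_nonpos
  have hψ01 := hanti self_mem_Ici (mem_Ici.2 zero_le_one) zero_le_one
  simp only [ψ, lineMap_apply_zero, lineMap_apply_one] at hψ01
  linarith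

end Gradient

/-- `p = prox_{r/L}(y)`. -/
def IsProxPoint (r : E → ℝ) (L : ℝ) (y p : E) : Prop :=
  ∀ w, L / 2 * ‖p - y‖ ^ 2 + r p ≤ L / 2 * ‖w - y‖ ^ 2 + r w

theorem IsProxPoint.le_add_inner {r : E → ℝ} {L : ℝ} {y p : E} (hp : IsProxPoint r L y p)
    (hr : ConvexOn ℝ univ r) (w : E) :
    r p ≤ r w + L * ⟪p - y, w - p⟫ := by
  refine le_of_forall_mem_Ioc_le_add_mul (c := L / 2 * ‖w - p‖ ^ 2) fun t ht ↦ ?_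
  have hmin := hp (p + t • (w - p))
  have hnorm : ‖p + t • (w - p) - y‖ ^ 2
      = ‖p - y‖ ^ 2 + 2 * (t * ⟪p - y, w - p⟫) + t ^ 2 * ‖w - p‖ ^ 2 := by
    rw [show p + t • (w - p) - y = (p - y) + t • (w - p) by abel, norm_add_sq_real,
      real_inner_smul_right, norm_smul, Real.norm_eq_abs, mul_pow, sq_abs]
  have hconv : r (p + t • (w - p)) ≤ (1 - t) * r p + t * r w := by
    rw [show p + t • (w - p) = (1 - t) • p + t • w by module]
    exact hr.2 (mem_univ p) (mem_univ w) (by linarith [ht.2]) ht.1.le (by ring)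
  rw [hnorm] at hmin
  refine le_of_mul_le_mul_left ?_ ht.1
  nlinarith

theorem proxGrad_step_le [CompleteSpace E] {g r : E → ℝ} {gradg : E → E} {L : ℝ}
    (hg : ConvexOn ℝ univ g) (hr : ConvexOn ℝ univ r) (hgrad : ∀ z, HasGradientAt g (gradg z) z)
    (hL : L ≠ 0) (hLip : ∀ z₁ z₂, ‖gradg z₁ - gradg z₂‖ ≤ L * ‖z₁ - z₂‖) {x x' : E}
    (hx' : IsProxPoint r L (x - (1 / L) • gradg x) x') (w : E) :
    g x' + r x' ≤ g w + r w + L / 2 * (‖w - x‖ ^ 2 - ‖w - x'‖ ^ 2) := by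
  have hprox := hx'.le_add_inner hr w
  have hdescent := le_add_inner_add_sq_of_gradient_lipschitz hgrad hLip x x'
  have hconvex := hg.add_inner_le_of_hasGradientAt (mem_univ x) (mem_univ w) (hgrad x)
  have hinner : L * ⟪x' - (x - (1 / L) • gradg x), w - x'⟫
      = L * ⟪w - x', x' - x⟫ + ⟪gradg x, w - x'⟫ := by
    rw [show x' - (x - (1 / L) • gradg x) = (x' - x) + (1 / L) • gradg x by abel,
      inner_add_left, real_inner_smul_left, real_inner_comm (x' - x)]
    field_simp
  have hgrad_split : ⟪gradg x, x' - x⟫ + ⟪gradg x, w - x'⟫ = ⟪gradg x, w - x⟫ := by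
    rw [← inner_add_right, sub_add_sub_cancel']
  have hnorm : ‖w - x‖ ^ 2 = ‖w - x'‖ ^ 2 + 2 * ⟪w - x', x' - x⟫ + ‖x' - x‖ ^ 2 := by
    rw [← norm_add_sq_real, sub_add_sub_cancel]
  linear_combination hprox + hdescent + hconvex + hinner + hgrad_split - L / 2 * hnorm

theorem stmt9_general {m : ℕ} (g r : EuclideanSpace ℝ (Fin m) → ℝ)
    (hg : ConvexOn ℝ Set.univ g) (hr : ConvexOn ℝ Set.univ r)
    (gradg : EuclideanSpace ℝ (Fin m) → EuclideanSpace ℝ (Fin m))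
    (hgrad : ∀ z, HasGradientAt g (gradg z) z)
    (L : ℝ) (hL : 0 < L)
    (hLip : ∀ z₁ z₂, ‖gradg z₁ - gradg z₂‖ ≤ L * ‖z₁ - z₂‖)
    (zseq : ℕ → EuclideanSpace ℝ (Fin m))
    (hstep : ∀ k, ∀ w,
        (L / 2) * ‖zseq (k + 1) - (zseq k - (1 / L) • gradg (zseq k))‖ ^ 2 +
            r (zseq (k + 1)) ≤
          (L / 2) * ‖w - (zseq k - (1 / L) • gradg (zseq k))‖ ^ 2 + r w)
    (zstar : EuclideanSpace ℝ (Fin m))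
    (K : ℕ) (hK : 0 < K) :
    g (zseq K) + r (zseq K) - (g zstar + r zstar) ≤
      L * ‖zseq 0 - zstar‖ ^ 2 / (2 * K) := by
  have hproxGrad : ∀ k w, g (zseq (k + 1)) + r (zseq (k + 1)) ≤
      g w + r w + L / 2 * (‖w - zseq k‖ ^ 2 - ‖w - zseq (k + 1)‖ ^ 2) :=
    fun k ↦ proxGrad_step_le hg hr hgrad hL.ne' hLip (hstep k)
  have hdecrease : ∀ k, g (zseq (k + 1)) + r (zseq (k + 1)) ≤ g (zseq k) + r (zseq k) := by
    intro k
    have := hproxGrad k (zseq k)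
    rw [sub_self, norm_zero] at this
    nlinarith [sq_nonneg ‖zseq k - zseq (k + 1)‖]
  have hrate := nat_mul_sub_le_of_telescope (f := fun k ↦ g (zseq k) + r (zseq k))
    (d := fun k ↦ ‖zstar - zseq k‖ ^ 2) (fmin := g zstar + r zstar) (c := L / 2) hdecrease
    (fun k ↦ by linarith [hproxGrad k zstar]) K
  rw [le_div_iff₀ (by positivity), norm_sub_rev]
  nlinarith [sq_nonneg ‖zstar - zseq K‖]

theorem stmt9 {m : ℕ} (g r : EuclideanSpace ℝ (Fin m) → ℝ)
    (hg : ConvexOn ℝ Set.univ g) (hr : ConvexOn ℝ Set.univ r)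
    (gradg : EuclideanSpace ℝ (Fin m) → EuclideanSpace ℝ (Fin m))
    (hgrad : ∀ z, HasGradientAt g (gradg z) z)
    (L : ℝ) (hL : 0 < L)
    (hLip : ∀ z₁ z₂, ‖gradg z₁ - gradg z₂‖ ≤ L * ‖z₁ - z₂‖)
    (zseq : ℕ → EuclideanSpace ℝ (Fin m))
    (hstep : ∀ k, ∀ w,
        (L / 2) * ‖zseq (k + 1) - (zseq k - (1 / L) • gradg (zseq k))‖ ^ 2 +
            r (zseq (k + 1)) ≤
          (L / 2) * ‖w - (zseq k - (1 / L) • gradg (zseq k))‖ ^ 2 + r w)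
    (zstar : EuclideanSpace ℝ (Fin m))
    (hmin : ∀ z, g zstar + r zstar ≤ g z + r z)
    (K : ℕ) (hK : 0 < K) :
    g (zseq K) + r (zseq K) - (g zstar + r zstar) ≤
      L * ‖zseq 0 - zstar‖ ^ 2 / (2 * K) :=
  stmt9_general g r hg hr gradg hgrad L hL hLip zseq hstep zstar K hK
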